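/- Let $\{u^{(1)},\ldots,u^{(n-d)}\}$ be a lattice basis of $\ker_{\mathbb{Z}}(A)$ and let $J = \langle x^{u^{(1)}_+} - x^{u^{(1)}_-},\ \ldots,\ x^{u^{(n-d)}_+} - x^{u^{(n-d)}_-} \rangle \subset \mathbb{C}[x_1,\ldots,x_n]$. Then the toric ideal satisfies $I_A = J : (x_1 x_2 \cdots x_n)^{\infty}$, and moreover this saturation can be computed one variable at a time: $I_A = ((\cdots((J : x_1^{\infty}) : x_2^{\infty})\cdots) : x_n^{\infty})$. -/

import Mathlib

open MvPolynomial

noncomputable section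

universe u

variable {α β : Type*} [Fintype α] [Fintype β]

/-- The Laurent monomial `t^a` in the group algebra `ℂ[ℤ^α]` (the Laurent polynomial ring). -/
def laurentMonomial (a : α → ℤ) : AddMonoidAlgebra ℂ (α →₀ ℤ) :=
  AddMonoidAlgebra.single (Finsupp.equivFunOnFinite.symm a) 1

/-- The monomial map `φ_A : x_j ↦ t^{a_j}` where `a_j` is the `j`-th column of `A`. -/
def phiMap (A : Matrix α β ℤ) : MvPolynomial β ℂ →ₐ[ℂ] AddMonoidAlgebra ℂ (α →₀ ℤ) :=
  MvPolynomial.aeval fun j => laurentMonomial fun i => A i j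

/-- The toric ideal `I_A`, the kernel of `φ_A`. -/
def toricIdeal (A : Matrix α β ℤ) : Ideal (MvPolynomial β ℂ) :=
  RingHom.ker (phiMap A).toRingHom

/-- The leading monomial (exponent vector) of `f` with respect to a monomial order. -/
def leadMon (m : MonomialOrder β) (f : MvPolynomial β ℂ) : β →₀ ℕ :=
  m.toSyn.symm (f.support.sup m.toSyn)

/-- The leading coefficient of `f` with respect to a monomial order. -/
def leadCoeff (m : MonomialOrder β) (f : MvPolynomial β ℂ) : ℂ := f.coeff (leadMon m f)

/-- `G` is a Gröbner basis of `I`: a finite set of nonzero elements of `I` whose leading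
monomials generate the initial ideal of `I` (i.e. the leading monomial of every nonzero
element of `I` is divisible by the leading monomial of some element of `G`). -/
def IsGroebnerBasis (m : MonomialOrder β) (I : Ideal (MvPolynomial β ℂ))
    (G : Set (MvPolynomial β ℂ)) : Prop :=
  G.Finite ∧ (∀ g ∈ G, g ∈ I ∧ g ≠ 0) ∧
    ∀ f ∈ I, f ≠ 0 → ∃ g ∈ G, leadMon m g ≤ leadMon m f

/-- `G` is the reduced Gröbner basis of `I`: a Gröbner basis, all of whose elements are monic,
such that no monomial occurring in an element of `G` is divisible by the leading monomial of
another element of `G`. -/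
def IsReducedGroebnerBasis (m : MonomialOrder β) (I : Ideal (MvPolynomial β ℂ))
    (G : Set (MvPolynomial β ℂ)) : Prop :=
  IsGroebnerBasis m I G ∧ (∀ g ∈ G, leadCoeff m g = 1) ∧
    ∀ g ∈ G, ∀ g' ∈ G, g' ≠ g → ∀ c ∈ g.support, ¬ leadMon m g' ≤ c

/-- The positive part `w⁺` of an integer vector, as an exponent vector. -/
def posPart (w : β → ℤ) : β →₀ ℕ := Finsupp.equivFunOnFinite.symm fun i => (w i).toNat

/-- The negative part `w⁻` of an integer vector, as an exponent vector. -/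
def negPart (w : β → ℤ) : β →₀ ℕ := Finsupp.equivFunOnFinite.symm fun i => (-(w i)).toNat

/-- The binomial `x^{w⁺} - x^{w⁻}` associated to an integer vector `w`. -/
def binom (w : β → ℤ) : MvPolynomial β ℂ := monomial (posPart w) 1 - monomial (negPart w) 1

/-- A circuit of `A`: a nonzero integer vector in `ker A` with coprime entries whose support
is minimal with respect to inclusion among supports of nonzero elements of `ker A`. -/
def IsCircuit (A : Matrix α β ℤ) (u : β → ℤ) : Prop :=
  u ≠ 0 ∧ A.mulVec u = 0 ∧ Finset.gcd Finset.univ u = 1 ∧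
    ∀ v : β → ℤ, v ≠ 0 → A.mulVec v = 0 →
      {i | v i ≠ 0} ⊆ {i | u i ≠ 0} → {i | v i ≠ 0} = {i | u i ≠ 0}

/-- A sign pattern `ρ ∈ {+1,-1}^n`. -/
def IsSignPattern (ρ : β → ℤ) : Prop := ∀ i, ρ i = 1 ∨ ρ i = -1

/-- Membership in `H_ρ = ℝ^n_ρ ∩ ker_ℤ(A)`: integer kernel elements conforming to the sign
pattern `ρ`. -/
def MemH (A : Matrix α β ℤ) (ρ : β → ℤ) (w : β → ℤ) : Prop :=
  A.mulVec w = 0 ∧ ∀ i, 0 ≤ ρ i * w i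

/-- `w` belongs to the Hilbert basis of the pointed cone `H_ρ`: it is a nonzero element of
`H_ρ` which cannot be written as the sum of two nonzero elements of `H_ρ` (equivalently, it
belongs to the unique minimal generating set of the monoid `H_ρ`). -/
def IsHilbertBasisElem (A : Matrix α β ℤ) (ρ : β → ℤ) (w : β → ℤ) : Prop :=
  MemH A ρ w ∧ w ≠ 0 ∧
    ¬ ∃ a b : β → ℤ, MemH A ρ a ∧ MemH A ρ b ∧ a ≠ 0 ∧ b ≠ 0 ∧ w = a + b

/-- `w` is a Graver basis vector of `A`: a member of the Hilbert basis of `H_ρ` for some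
sign pattern `ρ`. -/
def IsGraverVector (A : Matrix α β ℤ) (w : β → ℤ) : Prop :=
  ∃ ρ : β → ℤ, IsSignPattern ρ ∧ IsHilbertBasisElem A ρ w

/-- The Graver basis `Gr_A` of the toric ideal `I_A`, as a set of binomials. -/
def graverBasis (A : Matrix α β ℤ) : Set (MvPolynomial β ℂ) :=
  { p | ∃ w : β → ℤ, IsGraverVector A w ∧ p = binom w }

/-- The degree of the binomial `x^{w⁺} - x^{w⁻}`, namely `max(Σ w⁺, Σ w⁻)`. -/
def degZ (w : β → ℤ) : ℕ := max (∑ i, (w i).toNat) (∑ i, (-(w i)).toNat)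

/-- The columns of `A` generate a pointed cone. -/
def PointedCone' (A : Matrix α β ℤ) : Prop :=
  ∀ c : β → ℚ, (∀ i, 0 ≤ c i) → (A.map (Int.cast : ℤ → ℚ)).mulVec c = 0 → c = 0

/-- The row span of `A` contains the all-ones vector. -/
def RowSpanOne (A : Matrix α β ℤ) : Prop :=
  ∃ w : α → ℚ, (A.map (Int.cast : ℤ → ℚ)).vecMul w = fun _ => 1

/-- The universal Gröbner basis of an ideal: the union of its reduced Gröbner bases over
all term orders. -/
def universalGroebnerBasis {γ : Type u} [Fintype γ] (I : Ideal (MvPolynomial γ ℂ)) :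
    Set (MvPolynomial γ ℂ) :=
  { p | ∃ (m : MonomialOrder.{u, u} γ) (G : Set (MvPolynomial γ ℂ)),
      IsReducedGroebnerBasis m I G ∧ p ∈ G }

/-- The initial ideal of `I` with respect to a monomial order: the monomial ideal generated by
the leading monomials of the nonzero elements of `I`. -/
def initialIdeal (m : MonomialOrder β) (I : Ideal (MvPolynomial β ℂ)) :
    Ideal (MvPolynomial β ℂ) :=
  Ideal.span { p | ∃ f ∈ I, f ≠ 0 ∧ p = monomial (leadMon m f) (1 : ℂ) }

/-- The saturation `J : f^∞ = {g : f^k g ∈ J for some k ≥ 0}` of an ideal. -/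
def satIdeal {R : Type*} [CommRing R] (J : Ideal R) (f : R) : Ideal R where
  carrier := { g | ∃ k : ℕ, f ^ k * g ∈ J }
  zero_mem' := ⟨0, by simp⟩
  add_mem' := by
    rintro a b ⟨k, hk⟩ ⟨l, hl⟩
    refine ⟨k + l, ?_⟩
    have h1 : f ^ (k + l) * (a + b) = f ^ l * (f ^ k * a) + f ^ k * (f ^ l * b) := by ring
    rw [h1]
    exact Ideal.add_mem _ (Ideal.mul_mem_left _ _ hk) (Ideal.mul_mem_left _ _ hl)
  smul_mem' := by
    rintro c a ⟨k, hk⟩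
    refine ⟨k, ?_⟩
    have h1 : f ^ k * (c • a) = c * (f ^ k * a) := by
      simp only [smul_eq_mul]; ring
    rw [h1]
    exact Ideal.mul_mem_left _ _ hk

/-!
`φ_A` is the map of monoid algebras induced by the degree map `e ↦ A e` on exponents, so its
kernel is spanned, already as a vector space, by differences `x^e - x^{e'}` of monomials of equal
`A`-degree, and each of these is a monomial times the binomial of `e - e' ∈ ker A`. For an ideal
`K` from which monomial factors can be cancelled, the vectors `v` with `x^{v⁺} - x^{v⁻} ∈ K` form
a subgroup of `ℤⁿ`: up to a monomial factor, the binomial of `v + w` is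
`x^{w⁺} (x^{v⁺} - x^{v⁻}) + x^{v⁻} (x^{w⁺} - x^{w⁻})`. For `K = J : (x_1 ⋯ x_n)^∞` this subgroup
contains the lattice basis, hence all of `ker A`, and so `I_A ⊆ K`. Conversely, `φ_A` sends
monomials to units of the Laurent polynomial ring, so `I_A` is saturated with respect to every
variable and contains every saturation of `J ⊆ I_A`.
-/

namespace AddMonoidAlgebra

variable {k M N : Type*} [Ring k]

theorem sub_mapDomain_invFun_mem_span [Nonempty M] (f : M → N) (x : AddMonoidAlgebra k M) :
    x - mapDomain (Function.invFun f) (mapDomain f x) ∈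
      Submodule.span k {y | ∃ a b, f a = f b ∧ y = single a 1 - single b 1} := by
  induction x using induction_linear with
  | zero => simp
  | add x y hx hy =>
    rw [mapDomain_add, mapDomain_add, add_sub_add_comm]
    exact add_mem hx hy
  | single m r =>
    rw [mapDomain_single, mapDomain_single]
    have hfm : f (Function.invFun f (f m)) = f m := Function.invFun_eq ⟨m, rfl⟩
    have hsmul : single m r - single (Function.invFun f (f m)) r =
        r • (single m 1 - single (Function.invFun f (f m)) (1 : k)) := by
      simp [smul_sub, smul_single]
    rw [hsmul]
    exact Submodule.smul_mem _ r (Submodule.subset_span ⟨m, _, hfm.symm, rfl⟩)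

theorem mem_span_single_sub_single_of_mapDomain_eq_zero [Nonempty M] {f : M → N}
    {x : AddMonoidAlgebra k M} (hx : mapDomain f x = 0) :
    x ∈ Submodule.span k {y | ∃ a b, f a = f b ∧ y = single a 1 - single b 1} := by
  simpa [hx] using sub_mapDomain_invFun_mem_span f x

end AddMonoidAlgebra

section Saturation

variable {R : Type*} [CommRing R]

theorem le_satIdeal (J : Ideal R) (f : R) : J ≤ satIdeal J f :=
  fun g hg => ⟨0, by simpa using hg⟩

theorem satIdeal_mono {I J : Ideal R} (h : I ≤ J) (f : R) : satIdeal I f ≤ satIdeal J f :=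
  fun _ ⟨k, hk⟩ => ⟨k, h hk⟩

theorem mem_satIdeal_of_mul_mem_of_dvd_pow {J : Ideal R} {f a g : R} {M : ℕ}
    (hdvd : a ∣ f ^ M) (h : a * g ∈ satIdeal J f) : g ∈ satIdeal J f := by
  obtain ⟨k, hk⟩ := h
  obtain ⟨c, hc⟩ := hdvd
  refine ⟨k + M, ?_⟩
  rw [pow_add, hc, show f ^ k * (a * c) * g = c * (f ^ k * (a * g)) by ring]
  exact J.mul_mem_left c hk

theorem satIdeal_ker_le {S : Type*} [Semiring S] (φ : R →+* S) {f : R} (hf : IsUnit (φ f)) :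
    satIdeal (RingHom.ker φ) f ≤ RingHom.ker φ := by
  rintro g ⟨k, hk⟩
  rw [RingHom.mem_ker, map_mul, map_pow] at hk
  exact (hf.pow k).mul_right_eq_zero.mp hk

variable {ι : Type*} (f : ι → R)

theorem mem_foldl_satIdeal_of_mul_mem (l : List ι) {I : Ideal R} {g : R} {k : ℕ}
    (h : (l.map f).prod ^ k * g ∈ I) : g ∈ l.foldl (fun I i => satIdeal I (f i)) I := by
  induction l generalizing I with
  | nil => simpa using h
  | cons i l ih =>
    refine ih ⟨k, ?_⟩
    rwa [List.map_cons, List.prod_cons, mul_pow, mul_assoc] at h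

theorem foldl_satIdeal_le {K : Ideal R} (hK : ∀ i, satIdeal K (f i) ≤ K) (l : List ι)
    {I : Ideal R} (hI : I ≤ K) : l.foldl (fun I i => satIdeal I (f i)) I ≤ K := by
  induction l generalizing I with
  | nil => exact hI
  | cons i l ih => exact ih ((satIdeal_mono hI (f i)).trans (hK i))

end Saturation

theorem MvPolynomial.monomial_one_dvd_prod_X_pow {σ R : Type*} [Fintype σ] [CommSemiring R]
    (e : σ →₀ ℕ) : monomial e (1 : R) ∣ (∏ i, X i) ^ e.degree := by
  rw [monomial_eq, C_1, one_mul, Finsupp.prod_fintype _ _ fun _ => pow_zero _, ← Finset.prod_pow]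
  exact Finset.prod_dvd_prod_of_dvd _ _ fun i _ => pow_dvd_pow _ (Finsupp.le_degree i e)

-- `_root_.` picks the exponent vectors `posPart`, `negPart` of `binom` over Mathlib's `w⁺`, `w⁻`.
theorem posPart_apply (w : β → ℤ) (j : β) : _root_.posPart w j = (w j).toNat := rfl

theorem negPart_apply (w : β → ℤ) (j : β) : _root_.negPart w j = (-w j).toNat := rfl

theorem binom_zero : binom (0 : β → ℤ) = 0 := by
  rw [binom, show _root_.posPart (0 : β → ℤ) = _root_.negPart 0 from rfl, sub_self]

theorem binom_neg (v : β → ℤ) : binom (-v) = -binom v := by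
  have hpos : _root_.posPart (-v) = _root_.negPart v := rfl
  have hneg : _root_.negPart (-v) = _root_.posPart v := by
    ext j
    simp [posPart_apply, negPart_apply]
  rw [binom, binom, hpos, hneg, neg_sub]

theorem monomial_mul_binom_add (v w : β → ℤ) :
    monomial (_root_.posPart v + _root_.posPart w - _root_.posPart (v + w)) 1 * binom (v + w) =
      monomial (_root_.posPart w) 1 * binom v + monomial (_root_.negPart v) 1 * binom w := by
  set m := _root_.posPart v + _root_.posPart w - _root_.posPart (v + w)
  have hpos : m + _root_.posPart (v + w) = _root_.posPart v + _root_.posPart w := by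
    ext j
    simp only [m, Finsupp.add_apply, Finsupp.tsub_apply, posPart_apply, Pi.add_apply]
    omega
  have hneg : m + _root_.negPart (v + w) = _root_.negPart v + _root_.negPart w := by
    ext j
    simp only [m, Finsupp.add_apply, Finsupp.tsub_apply, posPart_apply, negPart_apply,
      Pi.add_apply]
    omega
  simp only [binom, mul_sub, monomial_mul, one_mul, hpos, hneg]
  rw [add_comm (_root_.posPart w), add_comm (_root_.posPart w)]
  ring

theorem monomial_sub_monomial_eq_monomial_mul_binom (e e' : β →₀ ℕ) :
    monomial e (1 : ℂ) - monomial e' 1 =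
      monomial (e ⊓ e') 1 * binom (fun j => (e j : ℤ) - e' j) := by
  have hpos : e ⊓ e' + _root_.posPart (fun j => (e j : ℤ) - e' j) = e := by
    ext j
    simp only [Finsupp.add_apply, Finsupp.inf_apply, posPart_apply]
    omega
  have hneg : e ⊓ e' + _root_.negPart (fun j => (e j : ℤ) - e' j) = e' := by
    ext j
    simp only [Finsupp.add_apply, Finsupp.inf_apply, negPart_apply]
    omega
  rw [binom, mul_sub, monomial_mul, monomial_mul, hpos, hneg, one_mul]

def binomSubgroup (K : Ideal (MvPolynomial β ℂ))
    (hK : ∀ e g, monomial e 1 * g ∈ K → g ∈ K) : AddSubgroup (β → ℤ) where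
  carrier := {v | binom v ∈ K}
  zero_mem' := by simp [binom_zero]
  add_mem' {v w} hv hw := hK _ _ <| by
    rw [monomial_mul_binom_add]
    exact add_mem (K.mul_mem_left _ hv) (K.mul_mem_left _ hw)
  neg_mem' {v} hv := by simpa [binom_neg] using hv

theorem binom_sum_zsmul_mem {K : Ideal (MvPolynomial β ℂ)}
    (hK : ∀ e g, monomial e 1 * g ∈ K → g ∈ K) {ι : Type*} [Fintype ι] {u : ι → β → ℤ}
    (hu : ∀ i, binom (u i) ∈ K) (c : ι → ℤ) : binom (∑ i, c i • u i) ∈ K :=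
  (binomSubgroup K hK).sum_mem fun i _ => (binomSubgroup K hK).zsmul_mem (hu i) (c i)

def toricDegree (A : Matrix α β ℤ) : (β →₀ ℕ) →+ (α →₀ ℤ) where
  toFun e := Finsupp.equivFunOnFinite.symm (A.mulVec fun j => (e j : ℤ))
  map_zero' := by ext; simp [Matrix.mulVec, dotProduct]
  map_add' e e' := by ext; simp [Matrix.mulVec, dotProduct, mul_add, Finset.sum_add_distrib]

theorem toricDegree_apply (A : Matrix α β ℤ) (e : β →₀ ℕ) (i : α) :
    toricDegree A e i = ∑ j, A i j * e j :=
  rfl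

theorem toricDegree_eq_toricDegree_iff {A : Matrix α β ℤ} {e e' : β →₀ ℕ} :
    toricDegree A e = toricDegree A e' ↔ A.mulVec (fun j => (e j : ℤ) - e' j) = 0 := by
  have hsub : A.mulVec (fun j => (e j : ℤ) - e' j) =
      A.mulVec (fun j => (e j : ℤ)) - A.mulVec (fun j => (e' j : ℤ)) := by
    rw [← Matrix.mulVec_sub]
    rfl
  rw [hsub, sub_eq_zero]
  exact Finsupp.equivFunOnFinite.symm.injective.eq_iff

theorem phiMap_eq_mapDomainAlgHom (A : Matrix α β ℤ) :
    phiMap A = AddMonoidAlgebra.mapDomainAlgHom ℂ ℂ (toricDegree A) := by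
  refine MvPolynomial.algHom_ext fun j => ?_
  have hcol : toricDegree A (Finsupp.single j 1) = Finsupp.equivFunOnFinite.symm fun i => A i j :=
    Finsupp.ext fun i => by classical simp [toricDegree_apply, Finsupp.single_apply]
  rw [phiMap, aeval_X, X, ← single_eq_monomial, AddMonoidAlgebra.mapDomainAlgHom_apply,
    AddMonoidAlgebra.mapDomain_single, hcol]
  rfl

theorem phiMap_monomial (A : Matrix α β ℤ) (e : β →₀ ℕ) (c : ℂ) :
    phiMap A (monomial e c) = AddMonoidAlgebra.single (toricDegree A e) c := by
  rw [phiMap_eq_mapDomainAlgHom, ← single_eq_monomial, AddMonoidAlgebra.mapDomainAlgHom_apply,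
    AddMonoidAlgebra.mapDomain_single]

theorem isUnit_phiMap_X (A : Matrix α β ℤ) (j : β) : IsUnit (phiMap A (X j)) := by
  rw [X, phiMap_monomial]
  exact (Group.isUnit (Multiplicative.ofAdd _)).map (AddMonoidAlgebra.of ℂ (α →₀ ℤ))

theorem binom_mem_toricIdeal {A : Matrix α β ℤ} {v : β → ℤ} (hv : A.mulVec v = 0) :
    binom v ∈ toricIdeal A := by
  have hsplit : (fun j => ((_root_.posPart v j : ℕ) : ℤ) - _root_.negPart v j) = v := by
    funext j
    rw [posPart_apply, negPart_apply]
    omega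
  have hdeg : toricDegree A (_root_.posPart v) = toricDegree A (_root_.negPart v) :=
    toricDegree_eq_toricDegree_iff.mpr (by rwa [hsplit])
  rw [toricIdeal, RingHom.mem_ker, AlgHom.toRingHom_eq_coe, RingHom.coe_coe, binom, map_sub,
    phiMap_monomial, phiMap_monomial, hdeg, sub_self]

theorem toricIdeal_le_of_binom_mem {A : Matrix α β ℤ} {K : Ideal (MvPolynomial β ℂ)}
    (hK : ∀ v, A.mulVec v = 0 → binom v ∈ K) : toricIdeal A ≤ K := by
  intro f hf
  rw [toricIdeal, RingHom.mem_ker, AlgHom.toRingHom_eq_coe, RingHom.coe_coe,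
    phiMap_eq_mapDomainAlgHom, AddMonoidAlgebra.mapDomainAlgHom_apply] at hf
  refine Ideal.span_le.mpr ?_ <| Submodule.span_le_restrictScalars ℂ _ _ <|
    AddMonoidAlgebra.mem_span_single_sub_single_of_mapDomain_eq_zero hf
  rintro _ ⟨e, e', he, rfl⟩
  rw [single_eq_monomial, single_eq_monomial, monomial_sub_monomial_eq_monomial_mul_binom]
  exact K.mul_mem_left _ (hK _ (toricDegree_eq_toricDegree_iff.mp he))

theorem toricIdeal_eq_saturation_of_lattice_basis_ideal_general (d n : ℕ)
    (A : Matrix (Fin d) (Fin n) ℤ)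
    (u : Fin (n - d) → Fin n → ℤ)
    (hker : ∀ i, A.mulVec (u i) = 0)
    (hbasis : ∀ w : Fin n → ℤ, A.mulVec w = 0 →
      ∃! c : Fin (n - d) → ℤ, w = ∑ i, c i • u i)
    (J : Ideal (MvPolynomial (Fin n) ℂ))
    (hJ : J = Ideal.span { p | ∃ i : Fin (n - d), p = binom (u i) }) :
    toricIdeal A = satIdeal J (∏ i : Fin n, X i) ∧
    toricIdeal A = (List.finRange n).foldl (fun I i => satIdeal I (X i)) J := by
  have hJ_le : J ≤ toricIdeal A := by
    rw [hJ, Ideal.span_le]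
    rintro _ ⟨i, rfl⟩
    exact binom_mem_toricIdeal (hker i)
  have hsat_le : satIdeal J (∏ i, X i) ≤ toricIdeal A :=
    (satIdeal_mono hJ_le _).trans <| satIdeal_ker_le _ <| by
      simpa [map_prod] using isUnit_phiMap_X A
  have hle_sat : toricIdeal A ≤ satIdeal J (∏ i, X i) := by
    refine toricIdeal_le_of_binom_mem fun v hv => ?_
    obtain ⟨c, rfl, -⟩ := hbasis v hv
    refine binom_sum_zsmul_mem (fun e _ => mem_satIdeal_of_mul_mem_of_dvd_pow
      (monomial_one_dvd_prod_X_pow e)) (fun i => le_satIdeal _ _ ?_) c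
    exact hJ ▸ Ideal.subset_span ⟨i, rfl⟩
  refine ⟨le_antisymm hle_sat hsat_le, le_antisymm (fun g hg => ?_)
    (foldl_satIdeal_le X (fun i => satIdeal_ker_le _ (isUnit_phiMap_X A i)) _ hJ_le)⟩
  obtain ⟨k, hk⟩ := hle_sat hg
  exact mem_foldl_satIdeal_of_mul_mem X _ (by rwa [← Fin.prod_univ_def])

/-- If `{u^{(1)}, …, u^{(n-d)}}` is a lattice basis of `ker_ℤ(A)` and `J` is the
ideal generated by the corresponding binomials, then
`I_A = J : (x_1 ⋯ x_n)^∞ = ((⋯(J : x_1^∞) : x_2^∞ ⋯) : x_n^∞)`. -/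
theorem toricIdeal_eq_saturation_of_lattice_basis_ideal (d n : ℕ)
    (A : Matrix (Fin d) (Fin n) ℤ)
    (hrank : A.rank = d) (hpointed : PointedCone' A) (hrow : RowSpanOne A)
    (u : Fin (n - d) → Fin n → ℤ)
    (hker : ∀ i, A.mulVec (u i) = 0)
    (hbasis : ∀ w : Fin n → ℤ, A.mulVec w = 0 →
      ∃! c : Fin (n - d) → ℤ, w = ∑ i, c i • u i)
    (J : Ideal (MvPolynomial (Fin n) ℂ))
    (hJ : J = Ideal.span { p | ∃ i : Fin (n - d), p = binom (u i) }) :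
    toricIdeal A = satIdeal J (∏ i : Fin n, X i) ∧
    toricIdeal A = (List.finRange n).foldl (fun I i => satIdeal I (X i)) J :=
  toricIdeal_eq_saturation_of_lattice_basis_ideal_general d n A u hker hbasis J hJ
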